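/- Let f : ℂ → ℂ be smooth, and suppose both f and ð₁f are bounded on ℂ and (ð̄₂(ð₁f))(z) = 0 for every z ∈ ℂ. Then there exist constants d₋₁, d₀, d₁ ∈ ℂ such that f(z) = (d₋₁ + d₀z + d₁z²)/(1+|z|²) for all z ∈ ℂ. (This is the paper's Eqs. (49)–(50): for a stationary Maxwell field, ð̄ðφ₀⁰ = 0, which forces the leading Maxwell coefficient φ₀⁰ to consist only of l = 1 spin-weight-1 spherical harmonics, φ₀⁰ = Σ_{m=−1.. 1} d_m ₁Y_{1,m}.) -/

import Mathlib

open Complex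

/-- The Wirtinger derivative `∂_z f = (1/2)(∂ₓf − i∂_yf)` of `f : ℂ → ℂ`,
viewed as a real-differentiable function on `ℝ²`. -/
noncomputable def wirtD (f : ℂ → ℂ) (z : ℂ) : ℂ :=
  (1 / 2 : ℂ) * (fderiv ℝ f z 1 - Complex.I * fderiv ℝ f z Complex.I)

/-- The conjugate Wirtinger derivative `∂_z̄ f = (1/2)(∂ₓf + i∂_yf)`. -/
noncomputable def wirtDBar (f : ℂ → ℂ) (z : ℂ) : ℂ :=
  (1 / 2 : ℂ) * (fderiv ℝ f z 1 + Complex.I * fderiv ℝ f z Complex.I)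

/-- The spin-weight-`s` Newman–Penrose operator
`(ð_s f)(z) = 2^(−1/2) (1+|z|²)^(1−s) ∂_z̄[(1+|z|²)^s f](z)`. -/
noncomputable def edth (s : ℤ) (f : ℂ → ℂ) (z : ℂ) : ℂ :=
  (Real.sqrt 2 : ℂ)⁻¹ * (1 + (‖z‖) ^ 2 : ℂ) ^ (1 - s) *
    wirtDBar (fun w => (1 + (‖w‖) ^ 2 : ℂ) ^ s * f w) z

/-- The spin-weight-`s` Newman–Penrose operator
`(ð̄_s f)(z) = 2^(−1/2) (1+|z|²)^(1+s) ∂_z[(1+|z|²)^(−s) f](z)`. -/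
noncomputable def edthBar (s : ℤ) (f : ℂ → ℂ) (z : ℂ) : ℂ :=
  (Real.sqrt 2 : ℂ)⁻¹ * (1 + (‖z‖) ^ 2 : ℂ) ^ (1 + s) *
    wirtD (fun w => (1 + (‖w‖) ^ 2 : ℂ) ^ (-s) * f w) z

theorem aux_q_ne (z : ℂ) : (1 + (‖z‖) ^ 2 : ℂ) ≠ 0 := by
  have : (1 + (‖z‖) ^ 2 : ℂ) = ((1 + (‖z‖) ^ 2 : ℝ) : ℂ) := by push_cast; ring
  rw [this, Complex.ofReal_ne_zero]
  positivity

theorem aux_q_smooth : ContDiff ℝ (⊤ : ℕ∞) (fun w : ℂ => (1 + (‖w‖) ^ 2 : ℂ)) := by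
  have : (fun w : ℂ => (1 + (‖w‖) ^ 2 : ℂ)) = fun w : ℂ => ((1 + ‖w‖ ^ 2 : ℝ) : ℂ) := by
    funext w; push_cast; ring
  rw [this]
  exact Complex.ofRealCLM.contDiff.comp (contDiff_const.add (contDiff_norm_sq ℝ))

theorem aux_abs_q (z : ℂ) : ‖(1 + (‖z‖) ^ 2 : ℂ)‖ = 1 + (‖z‖) ^ 2 := by
  have : (1 + (‖z‖) ^ 2 : ℂ) = ((1 + (‖z‖) ^ 2 : ℝ) : ℂ) := by push_cast; ring
  rw [this, Complex.norm_real, Real.norm_eq_abs, abs_of_pos]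
  positivity

theorem holo_of_CR {h : ℂ → ℂ} {L : ℂ →L[ℝ] ℂ} {z : ℂ} (hd : HasFDerivAt h L z)
    (hCR : L Complex.I = Complex.I * L 1) : DifferentiableAt ℂ h z := by
  set c := L 1 with hc
  have key : (c • ContinuousLinearMap.id ℂ ℂ).restrictScalars ℝ = L := by
    apply ContinuousLinearMap.ext
    intro w
    have hw : w = w.re • (1 : ℂ) + w.im • Complex.I := by
      simp [Complex.real_smul, Complex.re_add_im]
    have h1 : L w = w.re • L 1 + w.im • L Complex.I := by
      conv_lhs => rw [hw]
      rw [map_add, map_smul, map_smul]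
    have h2 : ((c • ContinuousLinearMap.id ℂ ℂ).restrictScalars ℝ) w = c * w := by
      simp [smul_eq_mul]
    rw [h2, h1, hCR, ← hc]
    simp only [Complex.real_smul]
    linear_combination (-c) * (Complex.re_add_im w)
  exact (hasFDerivAt_of_restrictScalars ℝ hd key).differentiableAt

theorem holo_of_wirtDBar {F : ℂ → ℂ} (hd : Differentiable ℝ F)
    (hw : ∀ z, wirtDBar F z = 0) : Differentiable ℂ F := by
  intro z
  apply holo_of_CR (hd z).hasFDerivAt
  have h0 := hw z
  unfold wirtDBar at h0
  have h1 : fderiv ℝ F z 1 + Complex.I * fderiv ℝ F z Complex.I = 0 := by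
    field_simp at h0
    simpa using h0
  linear_combination -Complex.I * h1 + (fderiv ℝ F z) Complex.I * Complex.I_sq

theorem antiholo_differentiable {h : ℂ → ℂ} (hd : Differentiable ℝ h)
    (hw : ∀ z, wirtD h z = 0) : Differentiable ℂ (fun z => h ((starRingEnd ℂ) z)) := by
  intro z
  have hcomp : HasFDerivAt (fun w => h ((starRingEnd ℂ) w))
      ((fderiv ℝ h ((starRingEnd ℂ) z)).comp (Complex.conjCLE : ℂ →L[ℝ] ℂ)) z :=
    (hd _).hasFDerivAt.comp z Complex.conjCLE.hasFDerivAt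
  apply holo_of_CR hcomp
  have h0 := hw ((starRingEnd ℂ) z)
  unfold wirtD at h0
  have h1 : fderiv ℝ h ((starRingEnd ℂ) z) 1
      - Complex.I * fderiv ℝ h ((starRingEnd ℂ) z) Complex.I = 0 := by
    field_simp at h0
    simpa using h0
  have e1 : ((fderiv ℝ h ((starRingEnd ℂ) z)).comp (Complex.conjCLE : ℂ →L[ℝ] ℂ)) Complex.I
      = - fderiv ℝ h ((starRingEnd ℂ) z) Complex.I := by
    simp [ContinuousLinearMap.comp_apply, Complex.conj_I]
  have e2 : ((fderiv ℝ h ((starRingEnd ℂ) z)).comp (Complex.conjCLE : ℂ →L[ℝ] ℂ)) 1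
      = fderiv ℝ h ((starRingEnd ℂ) z) 1 := by
    simp [ContinuousLinearMap.comp_apply]
  rw [e1, e2]
  linear_combination -Complex.I * h1 - (fderiv ℝ h ((starRingEnd ℂ) z)) Complex.I * Complex.I_sq

theorem decay_zero {h : ℂ → ℂ} (hd : Differentiable ℝ h) (hw : ∀ z, wirtD h z = 0)
    {M : ℝ} (hM : ∀ z, ‖h z‖ ≤ M / (1 + ‖z‖ ^ 2) ^ 2) :
    ∀ z, h z = 0 := by
  have hM0 : 0 ≤ M := by
    have := hM 0
    simp at this
    exact le_trans (norm_nonneg _) this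
  have hHd : Differentiable ℂ (fun z => h ((starRingEnd ℂ) z)) := antiholo_differentiable hd hw
  have hbnd : Bornology.IsBounded (Set.range (fun z => h ((starRingEnd ℂ) z))) := by
    rw [isBounded_iff_forall_norm_le]
    refine ⟨M, ?_⟩
    rintro y ⟨z, rfl⟩
    have h1 := hM ((starRingEnd ℂ) z)
    have h2 : ‖h ((starRingEnd ℂ) z)‖ = ‖h ((starRingEnd ℂ) z)‖ := rfl
    rw [h2]
    refine le_trans h1 ?_
    apply div_le_self hM0
    nlinarith [norm_nonneg ((starRingEnd ℂ) z),
      sq_nonneg (‖(starRingEnd ℂ) z‖)]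
  intro z
  have hzz : ∀ n : ℕ, ‖h z‖ ≤ M / (1 + (n : ℝ) ^ 2) ^ 2 := by
    intro n
    have e1 : h z = h ((starRingEnd ℂ) ((starRingEnd ℂ) z)) := by simp
    have e2 : h ((starRingEnd ℂ) ((starRingEnd ℂ) z)) = h ((starRingEnd ℂ) (n : ℂ)) :=
      hHd.apply_eq_apply_of_bounded hbnd _ _
    have e3 : ((starRingEnd ℂ) (n : ℂ)) = (n : ℂ) := by simp
    rw [e1, e2, e3]
    have := hM (n : ℂ)
    simpa using this
  have htend : Filter.Tendsto (fun n : ℕ => M / (1 + (n : ℝ) ^ 2) ^ 2)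
      Filter.atTop (nhds 0) := by
    apply Filter.Tendsto.div_atTop tendsto_const_nhds
    have t1 : Filter.Tendsto (fun n : ℕ => (n : ℝ)) Filter.atTop Filter.atTop :=
      tendsto_natCast_atTop_atTop
    have t2 := (Filter.tendsto_pow_atTop (two_ne_zero)).comp t1
    have t3 := Filter.tendsto_atTop_add_const_left Filter.atTop 1 t2
    exact (Filter.tendsto_pow_atTop two_ne_zero).comp t3
  have hle : ‖h z‖ ≤ 0 := ge_of_tendsto' htend hzz
  have := le_antisymm hle (norm_nonneg _)
  exact norm_eq_zero.mp this

theorem poly_growth {F : ℂ → ℂ} (hF : Differentiable ℂ F) {C : ℝ}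
    (hb : ∀ z, ‖F z‖ ≤ C * (1 + ‖z‖ ^ 2)) :
    ∃ a b c : ℂ, ∀ z, F z = a + b * z + c * z ^ 2 := by
  have hC0 : 0 ≤ C := by
    have := hb 0
    simp at this
    nlinarith [norm_nonneg (F 0)]
  have hds : ∀ (G : ℂ → ℂ), Differentiable ℂ G → Differentiable ℂ (dslope G 0) := by
    intro G hG
    rw [← differentiableOn_univ] at hG ⊢
    exact (differentiableOn_dslope (Filter.univ_mem)).mpr hG
  have hG1d := hds F hF
  have hG2d := hds (dslope F 0) hG1d
  have key1 : ∀ z : ℂ, F z = F 0 + z * dslope F 0 z := by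
    intro z
    have := sub_smul_dslope F 0 z
    simp only [sub_zero, smul_eq_mul] at this
    linear_combination -this
  have key2 : ∀ z : ℂ, dslope F 0 z = dslope F 0 0 + z * dslope (dslope F 0) 0 z := by
    intro z
    have := sub_smul_dslope (dslope F 0) 0 z
    simp only [sub_zero, smul_eq_mul] at this
    linear_combination -this
  -- bound G1 for big z
  have bd1 : ∀ z : ℂ, 1 ≤ ‖z‖ →
      ‖dslope F 0 z‖ ≤ (3 * C + ‖F 0‖) * ‖z‖ := by
    intro z hz
    have h1 : ‖z‖ * ‖dslope F 0 z‖ = ‖F z - F 0‖ := by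
      rw [← norm_mul]
      congr 1
      linear_combination -(key1 z)
    have h2 : ‖F z - F 0‖ ≤ C * (1 + ‖z‖ ^ 2) + ‖F 0‖ := by
      refine le_trans (norm_sub_le _ _) ?_
      gcongr
      exact hb z
    have h3 : C * (1 + ‖z‖ ^ 2) + ‖F 0‖
        ≤ (3 * C + ‖F 0‖) * ‖z‖ ^ 2 := by
      have ha2 : 1 ≤ ‖z‖ ^ 2 := by nlinarith [norm_nonneg z]
      nlinarith [norm_nonneg (F 0), ha2, hC0]
    have hzpos : (0:ℝ) < ‖z‖ := lt_of_lt_of_le one_pos hz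
    have := le_trans (le_trans h1.le h2) h3
    calc ‖dslope F 0 z‖
        = (‖z‖ * ‖dslope F 0 z‖) / ‖z‖ := by
          field_simp
      _ ≤ ((3 * C + ‖F 0‖) * ‖z‖ ^ 2) / ‖z‖ := by
          gcongr
      _ = (3 * C + ‖F 0‖) * ‖z‖ := by
          field_simp
  -- bound G2 for big z
  have bd2 : ∀ z : ℂ, 1 ≤ ‖z‖ →
      ‖dslope (dslope F 0) 0 z‖
        ≤ (3 * C + ‖F 0‖) + ‖dslope F 0 0‖ := by
    intro z hz
    have hzpos : (0:ℝ) < ‖z‖ := lt_of_lt_of_le one_pos hz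
    have h1 : ‖z‖ * ‖dslope (dslope F 0) 0 z‖
        = ‖dslope F 0 z - dslope F 0 0‖ := by
      rw [← norm_mul]
      congr 1
      linear_combination -(key2 z)
    have h2 : ‖dslope F 0 z - dslope F 0 0‖
        ≤ (3 * C + ‖F 0‖) * ‖z‖ + ‖dslope F 0 0‖ := by
      refine le_trans (norm_sub_le _ _) ?_
      gcongr
      exact bd1 z hz
    have h3 : (3 * C + ‖F 0‖) * ‖z‖ + ‖dslope F 0 0‖
        ≤ ((3 * C + ‖F 0‖) + ‖dslope F 0 0‖) * ‖z‖ := by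
      nlinarith [norm_nonneg (F 0),
        norm_nonneg (dslope F 0 0)]
    have h4 := le_trans (le_trans h1.le h2) h3
    rw [mul_comm _ (‖z‖)] at h4
    exact le_of_mul_le_mul_left h4 hzpos
  -- bound on ball
  obtain ⟨B, hB⟩ := (isCompact_closedBall (0:ℂ) 1).exists_bound_of_continuousOn
    (hG2d.continuous.continuousOn)
  have hbnd : Bornology.IsBounded (Set.range (dslope (dslope F 0) 0)) := by
    rw [isBounded_iff_forall_norm_le]
    refine ⟨max ((3 * C + ‖F 0‖) + ‖dslope F 0 0‖) B, ?_⟩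
    rintro y ⟨z, rfl⟩
    rcases le_or_gt (‖z‖) 1 with hz | hz
    · refine le_trans (hB z ?_) (le_max_right _ _)
      simpa [Metric.mem_closedBall, Complex.dist_eq] using hz
    · exact le_trans (bd2 z hz.le) (le_max_left _ _)
  have hcst : ∀ z : ℂ, dslope (dslope F 0) 0 z = dslope (dslope F 0) 0 0 :=
    fun z => hG2d.apply_eq_apply_of_bounded hbnd _ _
  refine ⟨F 0, dslope F 0 0, dslope (dslope F 0) 0 0, fun z => ?_⟩
  have k1 := key1 z
  have k2 := key2 z
  have k3 := hcst z
  calc F z = F 0 + z * dslope F 0 z := k1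
    _ = F 0 + z * (dslope F 0 0 + z * dslope (dslope F 0) 0 z) := by rw [← k2]
    _ = F 0 + dslope F 0 0 * z + dslope (dslope F 0) 0 0 * z ^ 2 := by rw [k3]; ring

/-- The representative `Y_k(z) = z^k (1+|z|²)^(−2)` of the spin-weight-2,
`l = 2` spherical harmonic `₂Y_{2,k−2}` in the stereographic chart. -/
noncomputable def Ysph (k : ℕ) (z : ℂ) : ℂ :=
  z ^ k / (1 + (‖z‖) ^ 2 : ℂ) ^ 2

/-- A smooth spin-weight-1 function `f` on the sphere with `f` and `ð₁f`
bounded and `ð̄₂(ð₁f) = 0` is a combination of the three `l = 1` harmonics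
`₁Y_{1,m}`, `m = −1, 0, 1`. -/
theorem edthBar_edth_kernel (f : ℂ → ℂ) (hf : ContDiff ℝ (⊤ : ℕ∞) f)
    (hbd : ∃ M : ℝ, ∀ z : ℂ, ‖f z‖ ≤ M)
    (hbd' : ∃ M : ℝ, ∀ z : ℂ, ‖edth 1 f z‖ ≤ M)
    (hker : ∀ z : ℂ, edthBar 2 (edth 1 f) z = 0) :
    ∃ dm1 d0 d1 : ℂ, ∀ z : ℂ,
      f z = (dm1 + d0 * z + d1 * z ^ 2) / (1 + (‖z‖) ^ 2 : ℂ) := by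
  obtain ⟨M, hM⟩ := hbd
  obtain ⟨M', hM'⟩ := hbd'
  have hM0 : 0 ≤ M := le_trans (norm_nonneg _) (hM 0)
  -- F = (1+|z|²) f
  have hFsm : ContDiff ℝ (⊤ : ℕ∞) (fun w : ℂ => (1 + (‖w‖) ^ 2 : ℂ) * f w) :=
    aux_q_smooth.mul hf
  have hg_eq : ∀ z, edth 1 f z
      = ((Real.sqrt 2 : ℝ) : ℂ)⁻¹ *
        wirtDBar (fun w : ℂ => (1 + (‖w‖) ^ 2 : ℂ) * f w) z := by
    intro z
    unfold edth
    have e : (fun w : ℂ => (1 + (‖w‖) ^ 2 : ℂ) ^ (1:ℤ) * f w)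
        = (fun w : ℂ => (1 + (‖w‖) ^ 2 : ℂ) * f w) := by
      funext w; rw [zpow_one]
    rw [e]
    norm_num
  -- smoothness of g = edth 1 f
  have hgsm : ContDiff ℝ (⊤ : ℕ∞) (edth 1 f) := by
    have h1 : ContDiff ℝ (⊤ : ℕ∞) (fun z : ℂ =>
        fderiv ℝ (fun w : ℂ => (1 + (‖w‖) ^ 2 : ℂ) * f w) z) :=
      hFsm.fderiv_right (by simp)
    have h2 := h1.clm_apply (contDiff_const (c := (1:ℂ)))
    have h3 := h1.clm_apply (contDiff_const (c := Complex.I))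
    have e : edth 1 f = fun z : ℂ => ((Real.sqrt 2 : ℝ) : ℂ)⁻¹ *
        ((1/2 : ℂ) * (fderiv ℝ (fun w : ℂ => (1 + (‖w‖) ^ 2 : ℂ) * f w) z 1
          + Complex.I * fderiv ℝ (fun w : ℂ => (1 + (‖w‖) ^ 2 : ℂ) * f w) z Complex.I)) := by
      funext z
      rw [hg_eq z]
      rfl
    rw [e]
    exact contDiff_const.mul (contDiff_const.mul (h2.add (contDiff_const.mul h3)))
  -- h = (1+|z|²)^{-2} g
  have hhsm : ContDiff ℝ (⊤ : ℕ∞) (fun w : ℂ => ((1 + (‖w‖) ^ 2 : ℂ) ^ 2)⁻¹ * edth 1 f w) :=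
    ((aux_q_smooth.pow 2).inv (fun z => pow_ne_zero 2 (aux_q_ne z))).mul hgsm
  have hsqrt_ne : ((Real.sqrt 2 : ℝ) : ℂ)⁻¹ ≠ 0 := by
    apply inv_ne_zero
    rw [Complex.ofReal_ne_zero]
    exact Real.sqrt_ne_zero'.mpr (by norm_num)
  have hwd : ∀ z, wirtD (fun w : ℂ => ((1 + (‖w‖) ^ 2 : ℂ) ^ 2)⁻¹ * edth 1 f w) z = 0 := by
    intro z
    have h0 := hker z
    unfold edthBar at h0
    have e : (fun w : ℂ => (1 + (‖w‖) ^ 2 : ℂ) ^ (-(2:ℤ)) * edth 1 f w)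
        = (fun w : ℂ => ((1 + (‖w‖) ^ 2 : ℂ) ^ 2)⁻¹ * edth 1 f w) := by
      funext w
      congr 1
    rw [e] at h0
    have hne2 : (1 + (‖z‖) ^ 2 : ℂ) ^ ((1:ℤ) + 2) ≠ 0 := zpow_ne_zero _ (aux_q_ne z)
    rcases mul_eq_zero.mp h0 with h' | h'
    · rcases mul_eq_zero.mp h' with h'' | h''
      · exact absurd h'' hsqrt_ne
      · exact absurd h'' hne2
    · exact h'
  -- decay bound for h
  have hhb : ∀ z, ‖((1 + (‖z‖) ^ 2 : ℂ) ^ 2)⁻¹ * edth 1 f z‖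
      ≤ M' / (1 + ‖z‖ ^ 2) ^ 2 := by
    intro z
    rw [norm_mul, norm_inv, norm_pow, aux_abs_q]
    calc ((1 + ‖z‖ ^ 2) ^ 2)⁻¹ * ‖edth 1 f z‖
        ≤ ((1 + ‖z‖ ^ 2) ^ 2)⁻¹ * M' := by
          have hpos : (0:ℝ) < ((1 + ‖z‖ ^ 2) ^ 2)⁻¹ := by positivity
          exact mul_le_mul_of_nonneg_left (hM' z) hpos.le
      _ = M' / (1 + ‖z‖ ^ 2) ^ 2 := by rw [inv_mul_eq_div]
  -- h ≡ 0 hence g ≡ 0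
  have hh0 := decay_zero (hhsm.differentiable (by simp)) hwd hhb
  have hg0 : ∀ z, edth 1 f z = 0 := by
    intro z
    have := hh0 z
    rcases mul_eq_zero.mp this with h' | h'
    · exact absurd h' (inv_ne_zero (pow_ne_zero 2 (aux_q_ne z)))
    · exact h'
  -- wirtDBar F = 0, F entire
  have hwb : ∀ z, wirtDBar (fun w : ℂ => (1 + (‖w‖) ^ 2 : ℂ) * f w) z = 0 := by
    intro z
    have := hg0 z
    rw [hg_eq z] at this
    rcases mul_eq_zero.mp this with h' | h'
    · exact absurd h' hsqrt_ne
    · exact h'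
  have hFholo : Differentiable ℂ (fun w : ℂ => (1 + (‖w‖) ^ 2 : ℂ) * f w) :=
    holo_of_wirtDBar (hFsm.differentiable (by simp)) hwb
  have hFb : ∀ z, ‖(1 + (‖z‖) ^ 2 : ℂ) * f z‖
      ≤ M * (1 + ‖z‖ ^ 2) := by
    intro z
    rw [norm_mul, aux_abs_q]
    calc (1 + ‖z‖ ^ 2) * ‖f z‖
        ≤ (1 + ‖z‖ ^ 2) * M := by
          have hpos : (0:ℝ) < 1 + ‖z‖ ^ 2 := by positivity
          exact mul_le_mul_of_nonneg_left (hM z) hpos.le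
      _ = M * (1 + ‖z‖ ^ 2) := mul_comm _ _
  obtain ⟨a, b, c, habc⟩ := poly_growth hFholo hFb
  refine ⟨a, b, c, fun z => ?_⟩
  have h1 : (1 + (‖z‖) ^ 2 : ℂ) * f z = a + b * z + c * z ^ 2 := habc z
  field_simp [aux_q_ne z]
  linear_combination h1
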